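/- arXiv:1311.7038 — 3 statements merged into one kernel-verified Lean document; each statement's English description precedes it below -/
import Mathlib

section
/- Let H be a group, X_H ⊆ H a subset, and n ≥ 1. Let W = (Fin n → H) ⋊ Sym(n) be the wreath product, the semidirect product in which σ ∈ Sym(n) acts on tuples by permuting coordinates. For h ∈ H and 1 ≤ i ≤ n write e_i(h) for the element of W whose tuple has h in slot i and 1 elsewhere and whose permutation is the identity, and for σ ∈ Sym(n) write p(σ) for the element with trivial tuple and permutation σ. Define, for 1 ≤ ℓ ≤ n, X_{2ℓ−1} = {e₁(h) : h ∈ X_H} ∪ {p((1 2)), p((2 3)), …, p((ℓ−1 ℓ))} and X_{2ℓ} = X_{2ℓ−1} ∪ {e_{ℓ+1}(h) : h ∈ H}, and define the coset leader sets CL(G_{2ℓ}/G_{2ℓ−1}) = {e_{ℓ+1}(h) : h ∈ H} and CL(G_{2ℓ+1}/G_{2ℓ}) = {p((j j+1 ⋯ ℓ+1)) : 1 ≤ j ≤ ℓ+1}. Then the Error Control Property holds at every step: (i) for every b ∈ X_{2ℓ} ∪ X_{2ℓ}⁻¹ and every c ∈ CL(G_{2ℓ}/G_{2ℓ−1}),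 either bc ∈ CL(G_{2ℓ}/G_{2ℓ−1}) or c⁻¹bc ∈ X_{2ℓ−1} ∪ X_{2ℓ−1}⁻¹; and (ii) for every b ∈ X_{2ℓ+1} ∪ X_{2ℓ+1}⁻¹ and every c ∈ CL(G_{2ℓ+1}/G_{2ℓ}), either bc ∈ CL(G_{2ℓ+1}/G_{2ℓ}) or c⁻¹bc ∈ X_{2ℓ} ∪ X_{2ℓ}⁻¹. -/
namespace GroupCode

/-- The action of `Sym(n)` on tuples `Fin n → H` by permuting coordinates:
`σ · (h₁, …, hₙ) = (h_{σ⁻¹(1)}, …, h_{σ⁻¹(n)})`. -/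
def permAut (n : ℕ) (H : Type*) [Group H] :
    Equiv.Perm (Fin n) →* MulAut (Fin n → H) where
  toFun σ :=
    { toFun := fun f => f ∘ σ.symm
      invFun := fun f => f ∘ σ
      left_inv := fun f => by ext i; simp
      right_inv := fun f => by ext i; simp
      map_mul' := fun f g => rfl }
  map_one' := by ext f i; rfl
  map_mul' := fun σ τ => by ext f i; rfl

/-- The wreath product `(Fin n → H) ⋊ Sym(n)`. -/
abbrev Wreath (n : ℕ) (H : Type*) [Group H] :=
  SemidirectProduct (Fin n → H) (Equiv.Perm (Fin n)) (permAut n H)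

/-- `e_i(h)`: the element of the wreath product whose tuple has `h` in slot `i`
and `1` elsewhere, and whose permutation is the identity. -/
def eSlot {n : ℕ} {H : Type*} [Group H] (i : Fin n) (h : H) : Wreath n H :=
  SemidirectProduct.inl (Pi.mulSingle i h)

/-- `p(σ)`: the element of the wreath product with trivial tuple and permutation `σ`. -/
def pPerm {n : ℕ} {H : Type*} [Group H] (σ : Equiv.Perm (Fin n)) : Wreath n H :=
  SemidirectProduct.inr σ

/-- The cycle `(j  j+1  ⋯  ℓ)` on `Fin n` (0-indexed), sending `j ↦ j+1 ↦ ⋯ ↦ ℓ ↦ j`. -/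
def cyclePerm (n j ℓ : ℕ) : Equiv.Perm (Fin n) :=
  ((List.finRange n).filter fun (i : Fin n) => decide (j ≤ (i : ℕ) ∧ (i : ℕ) ≤ ℓ)).formPerm

/-- The generating set `X_{2ℓ-1}` (for `1 ≤ ℓ ≤ n`, 1-indexed): `{e₁(h) : h ∈ X_H}`
together with the adjacent transpositions `(1 2), …, (ℓ−1 ℓ)`. -/
def Xodd {H : Type*} [Group H] (n : ℕ) (hn : 0 < n) (X_H : Set H) (ℓ : ℕ) :
    Set (Wreath n H) :=
  {w | ∃ h ∈ X_H, w = eSlot (⟨0, hn⟩ : Fin n) h} ∪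
    {w | ∃ a b : Fin n, (b : ℕ) = (a : ℕ) + 1 ∧ (b : ℕ) < ℓ ∧ w = pPerm (Equiv.swap a b)}

/-- The generating set `X_{2ℓ}` (for `1 ≤ ℓ ≤ n−1`, 1-indexed):
`X_{2ℓ−1} ∪ {e_{ℓ+1}(h) : h ∈ H}`. -/
def Xeven {H : Type*} [Group H] (n : ℕ) (hn : 0 < n) (X_H : Set H) (ℓ : ℕ) (hℓ : ℓ < n) :
    Set (Wreath n H) :=
  Xodd n hn X_H ℓ ∪ {w | ∃ h : H, w = eSlot (⟨ℓ, hℓ⟩ : Fin n) h}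

/-- The coset leaders `CL(G_{2ℓ}/G_{2ℓ−1}) = {e_{ℓ+1}(h) : h ∈ H}` (1-indexed). -/
def CLeven {H : Type*} [Group H] (n : ℕ) (ℓ : ℕ) (hℓ : ℓ < n) : Set (Wreath n H) :=
  {w | ∃ h : H, w = eSlot (⟨ℓ, hℓ⟩ : Fin n) h}

/-- The coset leaders `CL(G_{2ℓ+1}/G_{2ℓ}) = {p((j  j+1 ⋯ ℓ+1)) : 1 ≤ j ≤ ℓ+1}`
(1-indexed); 0-indexed these are the cycles on `{j, …, ℓ}` for `0 ≤ j ≤ ℓ`. -/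
def CLodd {H : Type*} [Group H] (n : ℕ) (ℓ : ℕ) : Set (Wreath n H) :=
  {w | ∃ j ≤ ℓ, w = pPerm (cyclePerm n j ℓ)}

end GroupCode

/-!
Everything reduces to the conjugation formulas `p(σ)⁻¹ e_i(h) p(σ) = e_{σ⁻¹ i}(h)` and
`p(σ)⁻¹ p(τ) p(σ) = p(σ⁻¹ τ σ)` in the wreath product. In part (i) every element of `X_{2ℓ-1}`
commutes with `e_{ℓ+1}(h)`, and the coset leaders `e_{ℓ+1}(H)` form a subgroup. In part (ii) the
cycle `c = (j ⋯ ℓ+1)` is Mathlib's `Fin.cycleIcc`: an adjacent transposition `(k k+1)` lengthens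
or shortens `c` when `k + 1 = j` or `k = j`, and otherwise `c` conjugates it to `(k k+1)` (if
`k + 1 < j`) or to `(k-1 k)` (if `j < k`); likewise `c⁻¹` fixes slot `1`, unless `j = 1`, when it
sends it to slot `ℓ + 1`.
-/

namespace GroupCode

lemma inv_mul_swap_mul {α : Type*} [DecidableEq α] (σ : Equiv.Perm α) (x y : α) :
    σ⁻¹ * Equiv.swap x y * σ = Equiv.swap (σ⁻¹ x) (σ⁻¹ y) := by
  rw [mul_assoc, Equiv.swap_mul_eq_mul_swap, inv_mul_cancel_left]

section Cycle

variable {n : ℕ}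

lemma map_val_filter_finRange {j ℓ : ℕ} (hℓ : ℓ < n) :
    ((List.finRange n).filter fun i : Fin n => decide (j ≤ (i : ℕ) ∧ (i : ℕ) ≤ ℓ)).map Fin.val
      = List.range' j (ℓ + 1 - j) := by
  have hrange : ((List.finRange n).filter fun i : Fin n => decide (j ≤ (i : ℕ) ∧ (i : ℕ) ≤ ℓ)).map
      Fin.val = (List.range n).filter fun k => decide (j ≤ k ∧ k ≤ ℓ) := by
    rw [← List.map_coe_finRange_eq_range, List.filter_map]
    rfl
  rw [hrange]
  refine List.Perm.eq_of_sortedLE ?_ (List.pairwise_lt_range' _).sortedLT.sortedLE ?_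
  · exact (List.pairwise_lt_range.sublist List.filter_sublist).sortedLT.sortedLE
  · rw [List.perm_ext_iff_of_nodup (List.nodup_range.filter _) List.nodup_range']
    intro k
    simp only [List.mem_filter, List.mem_range, List.mem_range'_1, decide_eq_true_eq]
    omega

lemma filter_finRange_eq_cons {j ℓ : ℕ} (hj : j ≤ ℓ) (hℓ : ℓ < n) :
    (List.finRange n).filter (fun i : Fin n => decide (j ≤ (i : ℕ) ∧ (i : ℕ) ≤ ℓ))
      = ⟨j, by omega⟩ ::
        (List.finRange n).filter fun i : Fin n => decide (j + 1 ≤ (i : ℕ) ∧ (i : ℕ) ≤ ℓ) := by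
  apply List.map_injective_iff.2 Fin.val_injective
  rw [List.map_cons, map_val_filter_finRange hℓ, map_val_filter_finRange hℓ,
    show ℓ + 1 - j = ℓ + 1 - (j + 1) + 1 by omega, List.range'_succ]

lemma cyclePerm_self {ℓ : ℕ} (hℓ : ℓ < n) : cyclePerm n ℓ ℓ = 1 := by
  have hnil : (List.finRange n).filter (fun i : Fin n => decide (ℓ + 1 ≤ (i : ℕ) ∧ (i : ℕ) ≤ ℓ))
      = [] := by simp
  rw [cyclePerm, filter_finRange_eq_cons le_rfl hℓ, hnil, List.formPerm_singleton]

lemma cyclePerm_eq_swap_mul {j ℓ : ℕ} (hj : j < ℓ) (hℓ : ℓ < n) :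
    cyclePerm n j ℓ = Equiv.swap ⟨j, by omega⟩ ⟨j + 1, by omega⟩ * cyclePerm n (j + 1) ℓ := by
  rw [cyclePerm, cyclePerm, filter_finRange_eq_cons hj.le hℓ, filter_finRange_eq_cons hj hℓ,
    List.formPerm_cons_cons]

lemma cycleIcc_succ_eq_swap {j : ℕ} (hj : j + 1 < n) :
    Fin.cycleIcc (⟨j, by omega⟩ : Fin n) ⟨j + 1, hj⟩ = Equiv.swap ⟨j, by omega⟩ ⟨j + 1, hj⟩ := by
  have : NeZero n := ⟨by omega⟩
  ext x : 1
  rcases lt_trichotomy x.val j with h | h | h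
  · rw [Fin.cycleIcc_of_lt (Fin.mk_lt_mk.2 h), Equiv.swap_apply_of_ne_of_ne] <;>
      simp [Fin.ext_iff] <;> omega
  · rw [show x = ⟨j, by omega⟩ from Fin.ext h,
      Fin.cycleIcc_of_ge_of_lt le_rfl (Fin.mk_lt_mk.2 (by omega)), Equiv.swap_apply_left]
    exact Fin.ext (Fin.val_add_one_of_lt' hj)
  rcases (Nat.succ_le_of_lt h).eq_or_lt with h' | h'
  · rw [show x = ⟨j + 1, hj⟩ from Fin.ext h'.symm,
      Fin.cycleIcc_of_last (Fin.mk_le_mk.2 (by omega)), Equiv.swap_apply_right]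
  · rw [Fin.cycleIcc_of_gt (Fin.mk_lt_mk.2 h'), Equiv.swap_apply_of_ne_of_ne] <;>
      simp [Fin.ext_iff] <;> omega

lemma cyclePerm_eq_cycleIcc {j ℓ : ℕ} (hj : j ≤ ℓ) (hℓ : ℓ < n) :
    cyclePerm n j ℓ = Fin.cycleIcc ⟨j, by omega⟩ ⟨ℓ, hℓ⟩ := by
  have : NeZero n := ⟨by omega⟩
  induction h : ℓ - j generalizing j with
  | zero =>
    obtain rfl : j = ℓ := by omega
    rw [cyclePerm_self hℓ, Fin.cycleIcc_eq]
  | succ k ih =>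
    rw [cyclePerm_eq_swap_mul (by omega) hℓ, ih (by omega) (by omega),
      ← cycleIcc_succ_eq_swap (by omega)]
    ext x : 1
    exact congrFun (Fin.cycleIcc.trans (Fin.mk_le_mk.2 (by omega)) (Fin.mk_le_mk.2 (by omega))) x

lemma cyclePerm_inv_apply_of_lt {j ℓ : ℕ} (hj : j ≤ ℓ) (hℓ : ℓ < n) {x : Fin n}
    (hx : (x : ℕ) < j) : (cyclePerm n j ℓ)⁻¹ x = x := by
  rw [Equiv.Perm.inv_eq_iff_eq, cyclePerm_eq_cycleIcc hj hℓ, Fin.cycleIcc_of_lt (Fin.lt_def.2 hx)]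

lemma cyclePerm_inv_apply_left {j ℓ : ℕ} (hj : j ≤ ℓ) (hℓ : ℓ < n) :
    (cyclePerm n j ℓ)⁻¹ ⟨j, by omega⟩ = ⟨ℓ, hℓ⟩ := by
  have : NeZero n := ⟨by omega⟩
  rw [Equiv.Perm.inv_eq_iff_eq, cyclePerm_eq_cycleIcc hj hℓ,
    Fin.cycleIcc_of_last (Fin.mk_le_mk.2 hj)]

lemma cyclePerm_inv_apply_succ {j ℓ x : ℕ} (hjx : j ≤ x) (hxℓ : x < ℓ) (hℓ : ℓ < n) :
    (cyclePerm n j ℓ)⁻¹ ⟨x + 1, by omega⟩ = ⟨x, by omega⟩ := by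
  have : NeZero n := ⟨by omega⟩
  rw [Equiv.Perm.inv_eq_iff_eq, cyclePerm_eq_cycleIcc (by omega) hℓ,
    Fin.cycleIcc_of_ge_of_lt (Fin.mk_le_mk.2 hjx) (Fin.mk_lt_mk.2 hxℓ)]
  exact Fin.ext (Fin.val_add_one_of_lt' (i := ⟨x, by omega⟩) (by simp only; omega)).symm

lemma cyclePerm_conj_swap_of_lt {a j ℓ : ℕ} (ha : a + 1 < j) (hj : j ≤ ℓ) (hℓ : ℓ < n) :
    (cyclePerm n j ℓ)⁻¹ * Equiv.swap ⟨a, by omega⟩ ⟨a + 1, by omega⟩ * cyclePerm n j ℓ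
      = Equiv.swap ⟨a, by omega⟩ ⟨a + 1, by omega⟩ := by
  rw [inv_mul_swap_mul, cyclePerm_inv_apply_of_lt hj hℓ (by simp; omega),
    cyclePerm_inv_apply_of_lt hj hℓ (by simp; omega)]

lemma cyclePerm_conj_swap_of_le {a j ℓ : ℕ} (ha : j ≤ a) (haℓ : a + 1 < ℓ) (hℓ : ℓ < n) :
    (cyclePerm n j ℓ)⁻¹ * Equiv.swap ⟨a + 1, by omega⟩ ⟨a + 1 + 1, by omega⟩ * cyclePerm n j ℓ
      = Equiv.swap ⟨a, by omega⟩ ⟨a + 1, by omega⟩ := by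
  rw [inv_mul_swap_mul, cyclePerm_inv_apply_succ ha (by omega) hℓ,
    cyclePerm_inv_apply_succ (x := a + 1) (by omega) (by omega) hℓ]

end Cycle

section Wreath

variable {H : Type*} [Group H] {n : ℕ}

def eSlotHom (i : Fin n) : H →* Wreath n H :=
  SemidirectProduct.inl.comp (MonoidHom.mulSingle (fun _ => H) i)

lemma coe_range_eSlotHom (i : Fin n) :
    ((eSlotHom (H := H) i).range : Set (Wreath n H)) = {w | ∃ h : H, w = eSlot i h} :=
  Set.ext fun _ => ⟨fun ⟨h, hw⟩ => ⟨h, hw.symm⟩, fun ⟨h, hw⟩ => ⟨h, hw.symm⟩⟩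

lemma pPerm_inv (σ : Equiv.Perm (Fin n)) : (pPerm (H := H) σ)⁻¹ = pPerm σ⁻¹ :=
  (map_inv SemidirectProduct.inr σ).symm

lemma pPerm_mul (σ τ : Equiv.Perm (Fin n)) : pPerm (H := H) σ * pPerm τ = pPerm (σ * τ) :=
  (map_mul SemidirectProduct.inr σ τ).symm

lemma permAut_mulSingle (σ : Equiv.Perm (Fin n)) (i : Fin n) (h : H) :
    permAut n H σ (Pi.mulSingle i h) = Pi.mulSingle (σ i) h :=
  Pi.mulSingle_comp_equiv σ.symm i h

lemma pPerm_inv_mul_eSlot_mul (σ : Equiv.Perm (Fin n)) (i : Fin n) (h : H) :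
    (pPerm σ)⁻¹ * eSlot i h * pPerm σ = eSlot (σ⁻¹ i) h := by
  rw [pPerm_inv, pPerm, pPerm, eSlot, eSlot, ← SemidirectProduct.inl_aut_inv, ← map_inv,
    permAut_mulSingle]

lemma pPerm_inv_mul_pPerm_mul (σ τ : Equiv.Perm (Fin n)) :
    (pPerm (H := H) σ)⁻¹ * pPerm τ * pPerm σ = pPerm (σ⁻¹ * τ * σ) := by
  rw [pPerm_inv, pPerm_mul, pPerm_mul]

lemma commute_eSlot_eSlot {i j : Fin n} (hij : i ≠ j) (h h' : H) :
    Commute (eSlot i h) (eSlot j h') :=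
  (Pi.mulSingle_commute (f := fun _ => H) hij h h').map SemidirectProduct.inl

lemma commute_eSlot_pPerm {σ : Equiv.Perm (Fin n)} {i : Fin n} (hσ : σ i = i) (h : H) :
    Commute (eSlot i h) (pPerm σ) := by
  have hconj := pPerm_inv_mul_eSlot_mul σ i h
  rw [Equiv.Perm.inv_eq_iff_eq.2 hσ.symm] at hconj
  calc eSlot i h * pPerm σ = pPerm σ * ((pPerm σ)⁻¹ * eSlot i h * pPerm σ) := by group
    _ = pPerm σ * eSlot i h := by rw [hconj]

end Wreath

section ErrorControl

variable {G : Type*} [Group G] {X X₁ X₂ Y CL : Set G}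

/-- The Error Control Property of a step `G_k ≤ G_{k+1}`, where `X` generates `G_{k+1}`, `Y`
generates `G_k` and `CL` is the set of coset leaders of `G_{k+1} / G_k`. -/
def ErrorControl (X Y CL : Set G) : Prop :=
  ∀ b ∈ X ∪ X⁻¹, ∀ c ∈ CL, b * c ∈ CL ∨ c⁻¹ * b * c ∈ Y ∪ Y⁻¹

lemma ErrorControl.union (h₁ : ErrorControl X₁ Y CL) (h₂ : ErrorControl X₂ Y CL) :
    ErrorControl (X₁ ∪ X₂) Y CL := by
  rintro b ((hb | hb) | hb | hb)
  exacts [h₁ b (.inl hb), h₂ b (.inl hb), h₁ b (.inr hb), h₂ b (.inr hb)]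

lemma ErrorControl.of_conj_mem (h : ∀ b ∈ X, ∀ c ∈ CL, c⁻¹ * b * c ∈ Y ∪ Y⁻¹) :
    ErrorControl X Y CL := by
  rintro b (hb | hb) c hc
  · exact .inr (h b hb c hc)
  · right
    have hconj : c⁻¹ * b * c = (c⁻¹ * b⁻¹ * c)⁻¹ := by group
    rw [hconj, Set.mem_union, Set.mem_inv, inv_inv, or_comm]
    exact h b⁻¹ hb c hc

lemma ErrorControl.of_inv_subset (hX : X⁻¹ ⊆ X)
    (h : ∀ b ∈ X, ∀ c ∈ CL, b * c ∈ CL ∨ c⁻¹ * b * c ∈ Y ∪ Y⁻¹) : ErrorControl X Y CL := by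
  rintro b (hb | hb)
  exacts [h b hb, h b (hX hb)]

lemma ErrorControl.of_subgroup (K : Subgroup G) (Y : Set G) : ErrorControl (K : Set G) Y K :=
  fun _ hb _ hc => .inl (K.mul_mem (hb.elim id K.inv_mem_iff.1) hc)

end ErrorControl

section ErrorControlWreath

variable {H : Type*} [Group H] {n : ℕ} (hn : 0 < n) (X_H : Set H)

lemma errorControl_Xodd_CLeven {ℓ : ℕ} (hℓ : 1 ≤ ℓ) (hℓn : ℓ < n) :
    ErrorControl (Xodd n hn X_H ℓ) (Xodd n hn X_H ℓ) (CLeven n ℓ hℓn) := by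
  refine .of_conj_mem fun b hb _ ⟨g, hc⟩ => ?_
  subst hc
  suffices hcomm : Commute (eSlot ⟨ℓ, hℓn⟩ g) b by rw [hcomm.inv_mul_cancel]; exact .inl hb
  rcases hb with ⟨h, -, rfl⟩ | ⟨a, a', ha', haℓ, rfl⟩
  · exact commute_eSlot_eSlot (by simp [Fin.ext_iff]; omega) g h
  · exact commute_eSlot_pPerm
      (Equiv.swap_apply_of_ne_of_ne (by simp [Fin.ext_iff]; omega) (by simp [Fin.ext_iff]; omega)) g

lemma errorControl_eSlot_zero_CLodd {ℓ : ℕ} (hℓn : ℓ < n) :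
    ErrorControl {w | ∃ h ∈ X_H, w = eSlot ⟨0, hn⟩ h} (Xeven n hn X_H ℓ hℓn) (CLodd n ℓ) := by
  refine .of_conj_mem ?_
  rintro _ ⟨h, hX, rfl⟩ _ ⟨j, hj, rfl⟩
  rw [pPerm_inv_mul_eSlot_mul]
  left
  rcases j.eq_zero_or_pos with rfl | hj0
  · rw [cyclePerm_inv_apply_left hj hℓn]
    exact .inr ⟨h, rfl⟩
  · rw [cyclePerm_inv_apply_of_lt hj hℓn hj0]
    exact .inl (.inl ⟨h, hX, rfl⟩)

lemma errorControl_swap_CLodd {ℓ : ℕ} (hℓn : ℓ < n) :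
    ErrorControl
      {w | ∃ a b : Fin n, (b : ℕ) = (a : ℕ) + 1 ∧ (b : ℕ) < ℓ + 1 ∧ w = pPerm (Equiv.swap a b)}
      (Xeven n hn X_H ℓ hℓn) (CLodd n ℓ) := by
  refine .of_inv_subset ?_ ?_
  · rintro w ⟨a, b, hab, hbℓ, hw⟩
    exact ⟨a, b, hab, hbℓ, by rw [← inv_inv w, hw, pPerm_inv, Equiv.swap_inv]⟩
  rintro _ ⟨⟨k, hk⟩, b, hkb, hbℓ, rfl⟩ _ ⟨j, hj, rfl⟩
  simp only at hkb
  have hk1 : k + 1 < n := by omega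
  obtain rfl : b = ⟨k + 1, hk1⟩ := Fin.ext hkb
  simp only at hbℓ
  rw [pPerm_mul, pPerm_inv_mul_pPerm_mul]
  rcases lt_trichotomy (k + 1) j with hkj | rfl | hjk
  · rw [cyclePerm_conj_swap_of_lt hkj hj hℓn]
    exact .inr (.inl (.inl (.inr ⟨_, _, rfl, by omega, rfl⟩)))
  · rw [← cyclePerm_eq_swap_mul (j := k) (by omega) hℓn]
    exact .inl ⟨k, by omega, rfl⟩
  rcases (Nat.le_of_lt_succ hjk).eq_or_lt with rfl | hjk
  · rw [cyclePerm_eq_swap_mul (j := j) (by omega) hℓn, Equiv.swap_mul_self_mul]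
    exact .inl ⟨j + 1, by omega, rfl⟩
  · obtain ⟨a, rfl⟩ : ∃ a, k = a + 1 := ⟨k - 1, by omega⟩
    rw [cyclePerm_conj_swap_of_le (a := a) (by omega) (by omega) hℓn]
    exact .inr (.inl (.inl (.inr ⟨_, _, rfl, Nat.lt_of_succ_lt_succ hbℓ, rfl⟩)))

end ErrorControlWreath

end GroupCode

open GroupCode in
theorem wreath_error_control_property_general
    {H : Type*} [Group H] (X_H : Set H)
    (n : ℕ) (hn : 0 < n) (ℓ : ℕ) (hℓ1 : 1 ≤ ℓ) (hℓn' : ℓ < n) :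
    (∀ b ∈ Xeven n hn X_H ℓ hℓn' ∪ (Xeven n hn X_H ℓ hℓn')⁻¹,
      ∀ c ∈ CLeven (H := H) n ℓ hℓn',
        b * c ∈ CLeven (H := H) n ℓ hℓn' ∨
          c⁻¹ * b * c ∈ Xodd n hn X_H ℓ ∪ (Xodd n hn X_H ℓ)⁻¹) ∧
    (∀ b ∈ Xodd n hn X_H (ℓ + 1) ∪ (Xodd n hn X_H (ℓ + 1))⁻¹,
      ∀ c ∈ CLodd (H := H) n ℓ,
        b * c ∈ CLodd (H := H) n ℓ ∨
          c⁻¹ * b * c ∈ Xeven n hn X_H ℓ hℓn' ∪ (Xeven n hn X_H ℓ hℓn')⁻¹) := by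
  have hslots := ErrorControl.of_subgroup (eSlotHom (H := H) ⟨ℓ, hℓn'⟩).range (Xodd n hn X_H ℓ)
  rw [coe_range_eSlotHom] at hslots
  exact ⟨(errorControl_Xodd_CLeven hn X_H hℓ1 hℓn').union hslots,
    (errorControl_eSlot_zero_CLodd hn X_H hℓn').union (errorControl_swap_CLodd hn X_H hℓn')⟩

open GroupCode in
/-- **Proposition (Statement 13).** For the wreath product `(Fin n → H) ⋊ Sym(n)` with
the generating sets `X_k` and coset leader sets described above, the Error Control
Property holds at every step. -/
theorem wreath_error_control_property
    {H : Type*} [Group H] (X_H : Set H)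
    (n : ℕ) (hn : 0 < n) (ℓ : ℕ) (hℓ1 : 1 ≤ ℓ) (hℓn : ℓ ≤ n - 1) (hℓn' : ℓ < n) :
    (∀ b ∈ Xeven n hn X_H ℓ hℓn' ∪ (Xeven n hn X_H ℓ hℓn')⁻¹,
      ∀ c ∈ CLeven (H := H) n ℓ hℓn',
        b * c ∈ CLeven (H := H) n ℓ hℓn' ∨
          c⁻¹ * b * c ∈ Xodd n hn X_H ℓ ∪ (Xodd n hn X_H ℓ)⁻¹) ∧
    (∀ b ∈ Xodd n hn X_H (ℓ + 1) ∪ (Xodd n hn X_H (ℓ + 1))⁻¹,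
      ∀ c ∈ CLodd (H := H) n ℓ,
        b * c ∈ CLodd (H := H) n ℓ ∨
          c⁻¹ * b * c ∈ Xeven n hn X_H ℓ hℓn' ∪ (Xeven n hn X_H ℓ hℓn')⁻¹) :=
  wreath_error_control_property_general X_H n hn ℓ hℓ1 hℓn'
end

section
/- Let G be a finite group of linear isometries of a finite-dimensional complex inner product space V, x₀ ∈ V a unit vector, and X ⊆ G a subset satisfying (‡): for every w in the orbit Gx₀ with w ≠ x₀ there is c ∈ X with ‖c w − x₀‖ < ‖w − x₀‖. For w ∈ Gx₀ let MG(w) = {c ∈ X ∪ {1} : ‖c w − x₀‖ ≤ ‖d w − x₀‖ for all d ∈ X ∪ {1}}, and let δ = min over w ∈ Gx₀ with w ≠ x₀ and c ∈ MG(w) of (‖w − x₀‖ − ‖c w − x₀‖); then δ > 0. Suppose g ∈ G and r ∈ V satisfy ‖r − g⁻¹x₀‖ < δ/3. Then: (a) for every g' ∈ G with g'g⁻¹x₀ ≠ x₀ there exists c ∈ X with ‖c(g' r) − x₀‖ < ‖g' r − x₀‖ − δ/3; consequently (b) every sequence g'₀ = 1, g'_{k+1} = c_{k+1} g'_k with c_{k+1}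 ∈ X and ‖g'_{k+1} r − x₀‖ < ‖g'_k r − x₀‖ − δ/3 has length less than 6/δ + 1, and if such a sequence cannot be extended (no c ∈ X satisfies ‖c(g'_K r) − x₀‖ < ‖g'_K r − x₀‖ − δ/3), then its final term g'_K lies in Stab_G(x₀)·g. -/
/-!
A word `w ≠ x₀` of the orbit can always be moved towards `x₀` by a generator in `X`, and by the
choice of `δ` the best generator gains at least `δ`. Isometries are `1`-Lipschitz, so replacing
`w = g' g⁻¹ x₀` by the received word `g' r`, which lies within `δ/3` of it, costs at most `δ/3`
on each side: a gain of more than `δ/3` survives. On the other hand every step of a run gains more than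
`δ/3`, while the initial distance `‖r - x₀‖` is less than `δ/3 + 2`; this bounds the length of a
run, and a run can only stop at some `g'` with `g' g⁻¹ x₀ = x₀`.
-/

noncomputable section

namespace GroupCode

variable {V : Type*} [NormedAddCommGroup V] [InnerProductSpace ℂ V]

/-- The group of linear isometries of a complex inner product space. -/
abbrev Iso (V : Type*) [NormedAddCommGroup V] [InnerProductSpace ℂ V] := V ≃ₗᵢ[ℂ] V

/-- The orbit `G x₀` of the initial vector. -/
def Orb (G : Subgroup (Iso V)) (x₀ : V) : Set V := {w | ∃ a ∈ G, w = a x₀}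

/-- The set `MG(w)` of minimal generators for a codeword `w`: the elements of `X ∪ {1}`
that move `w` closest to `x₀`. -/
def MG (x₀ : V) (X : Set (Iso V)) (w : V) : Set (Iso V) :=
  {c | c ∈ X ∪ {1} ∧ ∀ d ∈ X ∪ ({1} : Set (Iso V)), ‖c w - x₀‖ ≤ ‖d w - x₀‖}

end GroupCode

theorem Isometry.dist_apply_lt_sub_of_dist_le_sub {α : Type*} [PseudoMetricSpace α]
    {f : α → α} (hf : Isometry f) {u w x : α} {δ : ℝ} (huw : dist u w < δ / 3)
    (hw : dist (f w) x ≤ dist w x - δ) : dist (f u) x < dist u x - δ / 3 := by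
  have hfu : dist (f u) x ≤ dist u w + dist (f w) x := by
    simpa only [hf.dist_eq] using dist_triangle (f u) (f w) x
  have hwx : dist w x ≤ dist u w + dist u x := by
    simpa only [dist_comm w u] using dist_triangle w u x
  linarith

theorem nat_mul_add_le_of_forall_lt_sub {a : ℕ → ℝ} {ε : ℝ} {K : ℕ}
    (h : ∀ k < K, a (k + 1) < a k - ε) : a K + K * ε ≤ a 0 := by
  induction K with
  | zero => simp
  | succ K ih =>
    have hK := h K K.lt_succ_self
    have := ih fun k hk => h k (hk.trans K.lt_succ_self)
    push_cast
    linarith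

theorem Subgroup.mem_of_forall_succ_eq_mul {M : Type*} [Group M] {S : Subgroup M} {X : Set M}
    (hXS : X ⊆ S) {gs : ℕ → M} (h0 : gs 0 = 1) {K : ℕ}
    (hstep : ∀ k < K, ∃ c ∈ X, gs (k + 1) = c * gs k) : gs K ∈ S := by
  induction K with
  | zero => simp [h0]
  | succ K ih =>
    obtain ⟨c, hcX, hc⟩ := hstep K K.lt_succ_self
    rw [hc]
    exact S.mul_mem (hXS hcX) (ih fun k hk => hstep k (hk.trans K.lt_succ_self))

namespace GroupCode

variable {V : Type*} [NormedAddCommGroup V] [InnerProductSpace ℂ V]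

/-- The paper's `δ` is the least element of this set. -/
def gains (G : Subgroup (Iso V)) (x₀ : V) (X : Set (Iso V)) : Set ℝ :=
  {t | ∃ w ∈ Orb G x₀, w ≠ x₀ ∧ ∃ c ∈ MG x₀ X w, t = ‖w - x₀‖ - ‖c w - x₀‖}

variable {G : Subgroup (Iso V)} {x₀ w : V} {X : Set (Iso V)} {c : Iso V}

theorem MG_nonempty (hX : X.Finite) (x₀ w : V) : (MG x₀ X w).Nonempty := by
  obtain ⟨c, hc, hmin⟩ :=
    Set.exists_min_image _ (fun d : Iso V => ‖d w - x₀‖) (hX.union (Set.finite_singleton 1))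
      ⟨1, Or.inr rfl⟩
  exact ⟨c, hc, hmin⟩

theorem norm_sub_lt_of_mem_MG (hc : c ∈ MG x₀ X w) (hdec : ∃ d ∈ X, ‖d w - x₀‖ < ‖w - x₀‖) :
    ‖c w - x₀‖ < ‖w - x₀‖ := by
  obtain ⟨d, hdX, hd⟩ := hdec
  exact (hc.2 d (Or.inl hdX)).trans_lt hd

theorem mem_of_mem_MG_of_norm_sub_lt (hc : c ∈ MG x₀ X w) (hlt : ‖c w - x₀‖ < ‖w - x₀‖) :
    c ∈ X := by
  rcases hc.1 with hcX | rfl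
  · exact hcX
  · simp at hlt

theorem pos_of_mem_gains (hdd : ∀ w ∈ Orb G x₀, w ≠ x₀ → ∃ c ∈ X, ‖c w - x₀‖ < ‖w - x₀‖)
    {t : ℝ} (ht : t ∈ gains G x₀ X) : 0 < t := by
  obtain ⟨w, hw, hne, c, hc, rfl⟩ := ht
  exact sub_pos.2 (norm_sub_lt_of_mem_MG hc (hdd w hw hne))

theorem exists_norm_sub_le_sub (hX : X.Finite) {δ : ℝ} (hδ : δ ∈ lowerBounds (gains G x₀ X))
    (hw : w ∈ Orb G x₀) (hne : w ≠ x₀) (hdec : ∃ d ∈ X, ‖d w - x₀‖ < ‖w - x₀‖) :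
    ∃ c ∈ X, ‖c w - x₀‖ ≤ ‖w - x₀‖ - δ := by
  obtain ⟨c, hc⟩ := MG_nonempty hX x₀ w
  have hlt := norm_sub_lt_of_mem_MG hc hdec
  have hgain : δ ≤ ‖w - x₀‖ - ‖c w - x₀‖ := hδ ⟨w, hw, hne, c, hc, rfl⟩
  exact ⟨c, mem_of_mem_MG_of_norm_sub_lt hc hlt, by linarith⟩

end GroupCode

open GroupCode in
theorem primitive_decoding_correct_general
    {V : Type*} [NormedAddCommGroup V] [InnerProductSpace ℂ V]
    (G : Subgroup (Iso V)) (hGfin : (G : Set (Iso V)).Finite)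
    (x₀ : V) (hx₀ : ‖x₀‖ = 1)
    (X : Set (Iso V)) (hXG : X ⊆ (G : Set (Iso V)))
    (hdd : ∀ w ∈ Orb G x₀, w ≠ x₀ → ∃ c ∈ X, ‖c w - x₀‖ < ‖w - x₀‖)
    (δ : ℝ)
    (hδ : IsLeast {t : ℝ | ∃ w ∈ Orb G x₀, w ≠ x₀ ∧
      ∃ c ∈ MG x₀ X w, t = ‖w - x₀‖ - ‖c w - x₀‖} δ)
    (g : Iso V) (hg : g ∈ G)
    (r : V) (hr : ‖r - g⁻¹ x₀‖ < δ / 3) :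
    0 < δ ∧
    (∀ g' ∈ G, (g' * g⁻¹) x₀ ≠ x₀ →
      ∃ c ∈ X, ‖c (g' r) - x₀‖ < ‖g' r - x₀‖ - δ / 3) ∧
    (∀ (K : ℕ) (gs : ℕ → Iso V), gs 0 = 1 →
      (∀ k < K, ∃ c ∈ X, gs (k + 1) = c * gs k) →
      (∀ k < K, ‖gs (k + 1) r - x₀‖ < ‖gs k r - x₀‖ - δ / 3) →
      (K : ℝ) < 6 / δ + 1 ∧
      ((∀ c ∈ X, ¬ (‖c (gs K r) - x₀‖ < ‖gs K r - x₀‖ - δ / 3)) →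
        ∃ s : Iso V, s ∈ G ∧ s x₀ = x₀ ∧ gs K = s * g)) := by
  have hδpos : 0 < δ := pos_of_mem_gains hdd hδ.1
  have step : ∀ g' ∈ G, (g' * g⁻¹) x₀ ≠ x₀ →
      ∃ c ∈ X, ‖c (g' r) - x₀‖ < ‖g' r - x₀‖ - δ / 3 := by
    intro g' hg' hne
    have hw : (g' * g⁻¹) x₀ ∈ Orb G x₀ := ⟨_, mul_mem hg' (inv_mem hg), rfl⟩
    obtain ⟨c, hcX, hc⟩ :=
      exists_norm_sub_le_sub (hGfin.subset hXG) hδ.2 hw hne (hdd _ hw hne)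
    have hnear : dist (g' r) (g' (g⁻¹ x₀)) < δ / 3 := by rwa [g'.dist_map, dist_eq_norm]
    simp only [← dist_eq_norm] at hc ⊢
    exact ⟨c, hcX, c.isometry.dist_apply_lt_sub_of_dist_le_sub hnear hc⟩
  refine ⟨hδpos, step, fun K gs h0 hstep hdec => ⟨?_, fun hterm => ?_⟩⟩
  · have hrun := nat_mul_add_le_of_forall_lt_sub (a := fun k => ‖gs k r - x₀‖) hdec
    have hr₀ : ‖r - x₀‖ ≤ ‖r - g⁻¹ x₀‖ + 2 := by
      have htri := norm_sub_le_norm_sub_add_norm_sub r (g⁻¹ x₀) x₀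
      have hdiam := norm_sub_le (g⁻¹ x₀) x₀
      rw [LinearIsometryEquiv.norm_map, hx₀] at hdiam
      linarith
    rw [h0, LinearIsometryEquiv.coe_one, id] at hrun
    rw [div_add_one hδpos.ne', lt_div_iff₀ hδpos]
    linarith [norm_nonneg (gs K r - x₀)]
  · have hgsK : gs K ∈ G := Subgroup.mem_of_forall_succ_eq_mul hXG h0 hstep
    have hfix : (gs K * g⁻¹) x₀ = x₀ := by
      by_contra hne
      obtain ⟨c, hcX, hc⟩ := step (gs K) hgsK hne
      exact hterm c hcX hc
    exact ⟨gs K * g⁻¹, mul_mem hgsK (inv_mem hg), hfix, by group⟩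

open GroupCode in
/-- **Theorem (Statement 14).** Under condition (‡), the primitive decoding algorithm
decodes correctly with some noise: `δ > 0`; each non-initial position admits a step
decreasing the distance to `x₀` by more than `δ/3`; hence every run of the algorithm has
fewer than `6/δ + 1` steps and, at termination, outputs an element of `Stab_G(x₀)·g`. -/
theorem primitive_decoding_correct
    {V : Type*} [NormedAddCommGroup V] [InnerProductSpace ℂ V] [FiniteDimensional ℂ V]
    (G : Subgroup (Iso V)) (hGfin : (G : Set (Iso V)).Finite)
    (x₀ : V) (hx₀ : ‖x₀‖ = 1)
    (X : Set (Iso V)) (hXG : X ⊆ (G : Set (Iso V)))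
    (hdd : ∀ w ∈ Orb G x₀, w ≠ x₀ → ∃ c ∈ X, ‖c w - x₀‖ < ‖w - x₀‖)
    (δ : ℝ)
    (hδ : IsLeast {t : ℝ | ∃ w ∈ Orb G x₀, w ≠ x₀ ∧
      ∃ c ∈ MG x₀ X w, t = ‖w - x₀‖ - ‖c w - x₀‖} δ)
    (g : Iso V) (hg : g ∈ G)
    (r : V) (hr : ‖r - g⁻¹ x₀‖ < δ / 3) :
    0 < δ ∧
    (∀ g' ∈ G, (g' * g⁻¹) x₀ ≠ x₀ →
      ∃ c ∈ X, ‖c (g' r) - x₀‖ < ‖g' r - x₀‖ - δ / 3) ∧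
    (∀ (K : ℕ) (gs : ℕ → Iso V), gs 0 = 1 →
      (∀ k < K, ∃ c ∈ X, gs (k + 1) = c * gs k) →
      (∀ k < K, ‖gs (k + 1) r - x₀‖ < ‖gs k r - x₀‖ - δ / 3) →
      (K : ℝ) < 6 / δ + 1 ∧
      ((∀ c ∈ X, ¬ (‖c (gs K r) - x₀‖ < ‖gs K r - x₀‖ - δ / 3)) →
        ∃ s : Iso V, s ∈ G ∧ s x₀ = x₀ ∧ gs K = s * g)) :=
  primitive_decoding_correct_general G hGfin x₀ hx₀ X hXG hdd δ hδ g hg r hr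
end
end

section
/- Let m, n ≥ 1, let H be a finite group of linear isometries of ℂ^m, let v₀ ∈ ℂ^m be a unit vector, and let x₀ = (u₁v₀, …, uₙv₀) ∈ (ℂ^m)^n where 0 < u₁ < ⋯ < uₙ are real, with the inner product ⟨x, y⟩ = Σᵢ ⟨xᵢ, yᵢ⟩ on (ℂ^m)^n. Let x = (x₁, …, xₙ) ∈ (ℂ^m)^n. Suppose h₁, …, hₙ ∈ H satisfy Re⟨v₀, hᵢ xᵢ⟩ ≥ Re⟨v₀, k xᵢ⟩ for all k ∈ H and all i, and σ is a permutation of {1, …, n} with Re⟨v₀, h_{σ(1)} x_{σ(1)}⟩ ≤ Re⟨v₀, h_{σ(2)} x_{σ(2)}⟩ ≤ ⋯ ≤ Re⟨v₀, h_{σ(n)} x_{σ(n)}⟩. Let g x = (h_{σ(1)} x_{σ(1)}, …, h_{σ(n)} x_{σ(n)}). Then for every permutation τ of {1, …, n} and all k₁, …, kₙ ∈ H, setting g' x = (k_{τ(1)} x_{τ(1)}, …, k_{τ(n)} x_{τ(n)}), one has ‖g x − x₀‖ ≤ ‖g' x − x₀‖. In other words, g minimizes the distance of the transformed vector to x₀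 over the whole wreath product of H with Sym(n) acting on (ℂ^m)^n. -/
noncomputable section

open Finset Equiv

/-! The wreath product acts on `(ℂ^m)^n` by isometries, so by the polarization identity
`‖y - x₀‖² = ‖y‖² - 2 Re⟨y, x₀⟩ + ‖x₀‖²` minimizing the distance to `x₀` amounts to maximizing
`Re⟨y, x₀⟩ = Σᵢ uᵢ Re⟨v₀, yᵢ⟩`. Choosing each `hᵢ` maximizes every summand, and since the `uᵢ`
are increasing, the rearrangement inequality shows that sorting the maximal values increasingly
is optimal among all permutations. -/

theorem norm_sub_le_norm_sub_of_norm_eq_of_re_inner_le {𝕜 E : Type*} [RCLike 𝕜]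
    [NormedAddCommGroup E] [InnerProductSpace 𝕜 E] {a b c : E} (hab : ‖a‖ = ‖b‖)
    (hre : RCLike.re (inner 𝕜 b c) ≤ RCLike.re (inner 𝕜 a c)) :
    ‖a - c‖ ≤ ‖b - c‖ := by
  refine (pow_le_pow_iff_left₀ (norm_nonneg _) (norm_nonneg _) two_ne_zero).1 ?_
  rw [@norm_sub_sq 𝕜, @norm_sub_sq 𝕜, hab]
  linarith

theorem PiLp.norm_eq_of_apply_eq_perm_isometry {𝕜 ι E : Type*} [Semiring 𝕜] [Fintype ι]
    [SeminormedAddCommGroup E] [Module 𝕜 E] {k : ι → E ≃ₗᵢ[𝕜] E} {τ : Perm ι}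
    {x y : PiLp 2 (fun _ : ι => E)} (hy : ∀ i, y i = k (τ i) (x (τ i))) :
    ‖y‖ = ‖x‖ := by
  refine (pow_left_inj₀ (norm_nonneg _) (norm_nonneg _) two_ne_zero).1 ?_
  simp only [PiLp.norm_sq_eq_of_L2, hy, LinearIsometryEquiv.norm_map]
  exact Equiv.sum_comp τ fun i => ‖x i‖ ^ 2

theorem PiLp.re_inner_eq_sum_of_apply_eq_smul {𝕜 ι E : Type*} [RCLike 𝕜] [Fintype ι]
    [NormedAddCommGroup E] [InnerProductSpace 𝕜 E] {u : ι → ℝ} {v₀ : E}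
    {x₀ : PiLp 2 (fun _ : ι => E)} (hx₀ : ∀ i, x₀ i = (u i : 𝕜) • v₀)
    (y : PiLp 2 (fun _ : ι => E)) :
    RCLike.re (inner 𝕜 y x₀) = ∑ i, u i * RCLike.re (inner 𝕜 v₀ (y i)) := by
  rw [PiLp.inner_apply, map_sum]
  refine sum_congr rfl fun i _ => ?_
  rw [hx₀, inner_smul_right, RCLike.re_ofReal_mul, inner_re_symm]

theorem sum_mul_comp_perm_le_of_le_of_monovary {ι α : Type*} [Fintype ι] [Semiring α]
    [LinearOrder α] [IsStrictOrderedRing α] [ExistsAddOfLE α] {u a b : ι → α} {σ τ : Perm ι}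
    (hu : 0 ≤ u) (hba : b ≤ a) (hua : Monovary u (a ∘ σ)) :
    ∑ i, u i * b (τ i) ≤ ∑ i, u i * a (σ i) :=
  calc ∑ i, u i * b (τ i)
      ≤ ∑ i, u i * a (τ i) := sum_le_sum fun i _ => mul_le_mul_of_nonneg_left (hba _) (hu i)
    _ = ∑ i, u i * (a ∘ σ) ((σ⁻¹ * τ) i) := by simp
    _ ≤ ∑ i, u i * (a ∘ σ) i := hua.sum_mul_comp_perm_le_sum_mul

theorem wreath_sort_minimizes_general
    (m n : ℕ)
    (H : Subgroup ((EuclideanSpace ℂ (Fin m)) ≃ₗᵢ[ℂ] (EuclideanSpace ℂ (Fin m))))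
    (v₀ : EuclideanSpace ℂ (Fin m))
    (u : Fin n → ℝ) (hu : ∀ i, 0 < u i) (humono : StrictMono u)
    (x₀ : PiLp 2 (fun _ : Fin n => EuclideanSpace ℂ (Fin m)))
    (hx₀ : ∀ i, x₀ i = (u i : ℂ) • v₀)
    (x : PiLp 2 (fun _ : Fin n => EuclideanSpace ℂ (Fin m)))
    (h : Fin n → (EuclideanSpace ℂ (Fin m)) ≃ₗᵢ[ℂ] (EuclideanSpace ℂ (Fin m)))
    (hmax : ∀ (i : Fin n), ∀ k ∈ H,
      (inner ℂ v₀ (k (x i)) : ℂ).re ≤ (inner ℂ v₀ (h i (x i)) : ℂ).re)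
    (σ : Equiv.Perm (Fin n))
    (hsort : ∀ i j : Fin n, i ≤ j →
      (inner ℂ v₀ (h (σ i) (x (σ i))) : ℂ).re ≤ (inner ℂ v₀ (h (σ j) (x (σ j))) : ℂ).re)
    (gx : PiLp 2 (fun _ : Fin n => EuclideanSpace ℂ (Fin m)))
    (hgx : ∀ i, gx i = h (σ i) (x (σ i)))
    (τ : Equiv.Perm (Fin n))
    (k : Fin n → (EuclideanSpace ℂ (Fin m)) ≃ₗᵢ[ℂ] (EuclideanSpace ℂ (Fin m)))
    (hk : ∀ i, k i ∈ H)
    (g'x : PiLp 2 (fun _ : Fin n => EuclideanSpace ℂ (Fin m)))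
    (hg'x : ∀ i, g'x i = k (τ i) (x (τ i))) :
    ‖gx - x₀‖ ≤ ‖g'x - x₀‖ := by
  refine norm_sub_le_norm_sub_of_norm_eq_of_re_inner_le (𝕜 := ℂ)
    ((PiLp.norm_eq_of_apply_eq_perm_isometry hgx).trans
      (PiLp.norm_eq_of_apply_eq_perm_isometry hg'x).symm) ?_
  have hmonovary : Monovary u ((fun j => (inner ℂ v₀ (h j (x j))).re) ∘ σ) :=
    humono.monotone.monovary fun i j hij => hsort i j hij
  rw [PiLp.re_inner_eq_sum_of_apply_eq_smul hx₀, PiLp.re_inner_eq_sum_of_apply_eq_smul hx₀]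
  simp only [hgx, hg'x]
  exact sum_mul_comp_perm_le_of_le_of_monovary (fun i => (hu i).le)
    (fun j => hmax j (k j) (hk j)) hmonovary

/-- **Theorem (Statement 19).** For the wreath product of `H` with `Sym(n)` acting on
`(ℂ^m)^n`, choosing at each coordinate an element of `H` maximizing `Re⟨v₀, hᵢ xᵢ⟩` and a
permutation sorting these quantities increasingly minimizes the distance of the
transformed vector to the initial vector `x₀ = (u₁v₀, …, uₙv₀)` over the whole wreath
product. -/
theorem wreath_sort_minimizes
    (m n : ℕ) (hm : 1 ≤ m) (hn : 1 ≤ n)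
    (H : Subgroup ((EuclideanSpace ℂ (Fin m)) ≃ₗᵢ[ℂ] (EuclideanSpace ℂ (Fin m))))
    (hHfin : (H : Set ((EuclideanSpace ℂ (Fin m)) ≃ₗᵢ[ℂ] (EuclideanSpace ℂ (Fin m)))).Finite)
    (v₀ : EuclideanSpace ℂ (Fin m)) (hv₀ : ‖v₀‖ = 1)
    (u : Fin n → ℝ) (hu : ∀ i, 0 < u i) (humono : StrictMono u)
    (x₀ : PiLp 2 (fun _ : Fin n => EuclideanSpace ℂ (Fin m)))
    (hx₀ : ∀ i, x₀ i = (u i : ℂ) • v₀)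
    (x : PiLp 2 (fun _ : Fin n => EuclideanSpace ℂ (Fin m)))
    (h : Fin n → (EuclideanSpace ℂ (Fin m)) ≃ₗᵢ[ℂ] (EuclideanSpace ℂ (Fin m)))
    (hh : ∀ i, h i ∈ H)
    (hmax : ∀ (i : Fin n), ∀ k ∈ H,
      (inner ℂ v₀ (k (x i)) : ℂ).re ≤ (inner ℂ v₀ (h i (x i)) : ℂ).re)
    (σ : Equiv.Perm (Fin n))
    (hsort : ∀ i j : Fin n, i ≤ j →
      (inner ℂ v₀ (h (σ i) (x (σ i))) : ℂ).re ≤ (inner ℂ v₀ (h (σ j) (x (σ j))) : ℂ).re)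
    (gx : PiLp 2 (fun _ : Fin n => EuclideanSpace ℂ (Fin m)))
    (hgx : ∀ i, gx i = h (σ i) (x (σ i)))
    (τ : Equiv.Perm (Fin n))
    (k : Fin n → (EuclideanSpace ℂ (Fin m)) ≃ₗᵢ[ℂ] (EuclideanSpace ℂ (Fin m)))
    (hk : ∀ i, k i ∈ H)
    (g'x : PiLp 2 (fun _ : Fin n => EuclideanSpace ℂ (Fin m)))
    (hg'x : ∀ i, g'x i = k (τ i) (x (τ i))) :
    ‖gx - x₀‖ ≤ ‖g'x - x₀‖ :=
  wreath_sort_minimizes_general m n H v₀ u hu humono x₀ hx₀ x h hmax σ hsort gx hgx τ k hk g'x hg'x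
end
end
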